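/- arXiv:2201.01262 — 4 statements merged into one kernel-verified Lean document; each statement's English description precedes it below -/
import Mathlib

section
/- Let the E0 state transition map T : GF(2)¹³² → GF(2)¹³² act on states (x₀,…,x₂₄, y₀,…,y₃₀, z₀,…,z₃₂, u₀,…,u₃₈, c₀, c₁, d₀, d₁) by shifting each of the four LFSR blocks left by one position with new last entries x₀+x₅+x₁₃+x₁₇, y₀+y₇+y₁₅+y₁₉, z₀+z₅+z₉+z₂₉, u₀+u₃+u₁₁+u₃₅ respectively, and replacing (c₀,c₁,d₀,d₁) by (c₁, g₀', d₁, g₁'), where g₀' = x₁c₁ + y₇c₁ + z₁c₁ + u₇c₁ + x₁y₇ + x₁z₁ + x₁u₇ + y₇z₁ + y₇u₇ + z₁u₇ + c₁ + d₁ + c₀ + d₀ and g₁' = x₁y₇z₁u₇ + x₁y₇d₁ + x₁z₁d₁ + x₁u₇d₁ + y₇z₁d₁ + y₇u₇d₁ + z₁u₇d₁ + x₁c₁d₁ + y₇c₁d₁ + z₁c₁d₁ + u₇c₁d₁ + x₁y₇z₁c₁ + x₁y₇u₇c₁ + x₁z₁u₇c₁ + y₇z₁u₇c₁ + d₁ +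 c₀. Then T is a bijection of GF(2)¹³². -/
/-- The 132-bit internal state of the Bluetooth cipher E0. -/
structure E0State where
  x : Fin 25 → ZMod 2
  y : Fin 31 → ZMod 2
  z : Fin 33 → ZMod 2
  u : Fin 39 → ZMod 2
  c0 : ZMod 2
  c1 : ZMod 2
  d0 : ZMod 2
  d1 : ZMod 2

/-- The E0 state transition map. -/
def E0T (s : E0State) : E0State where
  x := fun j => if h : (j : ℕ) + 1 < 25 then s.x ⟨(j : ℕ) + 1, h⟩
                else s.x 0 + s.x 5 + s.x 13 + s.x 17
  y := fun j => if h : (j : ℕ) + 1 < 31 then s.y ⟨(j : ℕ) + 1, h⟩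
                else s.y 0 + s.y 7 + s.y 15 + s.y 19
  z := fun j => if h : (j : ℕ) + 1 < 33 then s.z ⟨(j : ℕ) + 1, h⟩
                else s.z 0 + s.z 5 + s.z 9 + s.z 29
  u := fun j => if h : (j : ℕ) + 1 < 39 then s.u ⟨(j : ℕ) + 1, h⟩
                else s.u 0 + s.u 3 + s.u 11 + s.u 35
  c0 := s.c1
  c1 :=
    s.x 1 * s.c1 + s.y 7 * s.c1 + s.z 1 * s.c1 + s.u 7 * s.c1
    + s.x 1 * s.y 7 + s.x 1 * s.z 1 + s.x 1 * s.u 7 + s.y 7 * s.z 1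
    + s.y 7 * s.u 7 + s.z 1 * s.u 7 + s.c1 + s.d1 + s.c0 + s.d0
  d0 := s.d1
  d1 :=
    s.x 1 * s.y 7 * s.z 1 * s.u 7 + s.x 1 * s.y 7 * s.d1 + s.x 1 * s.z 1 * s.d1
    + s.x 1 * s.u 7 * s.d1 + s.y 7 * s.z 1 * s.d1 + s.y 7 * s.u 7 * s.d1
    + s.z 1 * s.u 7 * s.d1 + s.x 1 * s.c1 * s.d1 + s.y 7 * s.c1 * s.d1
    + s.z 1 * s.c1 * s.d1 + s.u 7 * s.c1 * s.d1 + s.x 1 * s.y 7 * s.z 1 * s.c1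
    + s.x 1 * s.y 7 * s.u 7 * s.c1 + s.x 1 * s.z 1 * s.u 7 * s.c1
    + s.y 7 * s.z 1 * s.u 7 * s.c1 + s.d1 + s.c0

/-! The E0 map is triangular: the shifted registers reveal every old register entry but the
first, which the feedback then determines, and the new carry bits `c1`, `d1` are
`c0`, `d0` plus functions of the already recovered bits. Injective maps of a finite type are
bijective. -/

section LFSR

variable {G : Type*} {n : ℕ}

def lfsrShift (f : (Fin n → G) → G) (a : Fin n → G) (j : Fin n) : G :=
  if h : (j : ℕ) + 1 < n then a ⟨(j : ℕ) + 1, h⟩ else f a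

theorem lfsrShift_injective [NeZero n] {f : (Fin n → G) → G}
    (hf : ∀ a b, (∀ j, j ≠ 0 → a j = b j) → f a = f b → a 0 = b 0) :
    Function.Injective (lfsrShift f) := by
  intro a b hab
  have hshift : ∀ j, j ≠ 0 → a j = b j := by
    rintro ⟨j, hj⟩ hj0
    obtain ⟨i, rfl⟩ := Nat.exists_eq_succ_of_ne_zero (by simpa [Fin.ext_iff] using hj0)
    simpa [lfsrShift, hj] using congrFun hab ⟨i, by omega⟩
  have hfeedback : f a = f b := by
    have hn := NeZero.pos n
    have hlast := congrFun hab ⟨n - 1, by omega⟩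
    have hnot : ¬((⟨n - 1, by omega⟩ : Fin n) : ℕ) + 1 < n := by rw [Fin.val_mk]; omega
    rwa [lfsrShift, lfsrShift, dif_neg hnot, dif_neg hnot] at hlast
  funext j
  by_cases hj : j = 0
  · exact hj ▸ hf a b hshift hfeedback
  · exact hshift j hj

theorem eq_at_zero_of_tap_sum_eq [NeZero n] [AddRightCancelSemigroup G] {p q r : Fin n}
    (hp : p ≠ 0) (hq : q ≠ 0) (hr : r ≠ 0) (a b : Fin n → G) (hab : ∀ j, j ≠ 0 → a j = b j)
    (h : a 0 + a p + a q + a r = b 0 + b p + b q + b r) : a 0 = b 0 := by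
  rw [hab p hp, hab q hq, hab r hr] at h
  exact add_right_cancel (add_right_cancel (add_right_cancel h))

end LFSR

attribute [ext] E0State

instance : Finite E0State :=
  Finite.of_injective (fun s => (s.x, s.y, s.z, s.u, s.c0, s.c1, s.d0, s.d1)) fun s t h => by
    simp only [Prod.mk.injEq] at h
    obtain ⟨hx, hy, hz, hu, hc0, hc1, hd0, hd1⟩ := h
    exact E0State.ext hx hy hz hu hc0 hc1 hd0 hd1

theorem E0T_injective : Function.Injective E0T := by
  rintro ⟨x, y, z, u, c0, c1, d0, d1⟩ ⟨x', y', z', u', c0', c1', d0', d1'⟩ h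
  simp only [E0T, E0State.mk.injEq] at h
  obtain ⟨hx, hy, hz, hu, rfl, hc, rfl, hd⟩ := h
  -- each register of `E0T` is `lfsrShift` of the old one by definition
  obtain rfl := lfsrShift_injective (f := fun a => a 0 + a 5 + a 13 + a 17)
    (eq_at_zero_of_tap_sum_eq (by decide) (by decide) (by decide)) hx
  obtain rfl := lfsrShift_injective (f := fun a => a 0 + a 7 + a 15 + a 19)
    (eq_at_zero_of_tap_sum_eq (by decide) (by decide) (by decide)) hy
  obtain rfl := lfsrShift_injective (f := fun a => a 0 + a 5 + a 9 + a 29)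
    (eq_at_zero_of_tap_sum_eq (by decide) (by decide) (by decide)) hz
  obtain rfl := lfsrShift_injective (f := fun a => a 0 + a 3 + a 11 + a 35)
    (eq_at_zero_of_tap_sum_eq (by decide) (by decide) (by decide)) hu
  obtain rfl : c0 = c0' := add_left_cancel hd
  obtain rfl : d0 = d0' := add_left_cancel hc
  rfl

/-- The E0 state transition map is a bijection of GF(2)^132. -/
theorem stmt_13 : Function.Bijective E0T :=
  Finite.injective_iff_bijective.mp E0T_injective
end

section
/- With T the E0 state transition map as above, the inverse map T⁻¹ acts by shifting each LFSR block right by one position with new first entries x₂₄+x₁₉+x₁₁+x₇ (i.e., determined by x(0) = x(25) + x(5) + x(13) + x(17) solved for the oldest bit, and analogously for the other three registers), and recovering the previous FSM state (c₋₁, d₋₁) from (c₀, c₁, d₀, d₁) and the appropriate LFSR taps via the polynomial formulas h₀, h₁ obtained by solving the combiner equations; explicitly, composing the given right-shift-and-combiner-solve map S with T yields the identity on GF(2)¹³². -/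
/-- The quadratic part of the combiner equation for `c`, evaluated on the taps
of the previous state, i.e. on `x(0), y(6), z(0), u(6), c(0)`. -/
def E0lin (s : E0State) : ZMod 2 :=
  s.x 0 * s.c0 + s.y 6 * s.c0 + s.z 0 * s.c0 + s.u 6 * s.c0
  + s.x 0 * s.y 6 + s.x 0 * s.z 0 + s.x 0 * s.u 6 + s.y 6 * s.z 0
  + s.y 6 * s.u 6 + s.z 0 * s.u 6

/-- The higher-degree part of the combiner equation for `d`, evaluated on the
taps of the previous state. -/
def E0big (s : E0State) : ZMod 2 :=
  s.x 0 * s.y 6 * s.z 0 * s.u 6 + s.x 0 * s.y 6 * s.d0 + s.x 0 * s.z 0 * s.d0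
  + s.x 0 * s.u 6 * s.d0 + s.y 6 * s.z 0 * s.d0 + s.y 6 * s.u 6 * s.d0
  + s.z 0 * s.u 6 * s.d0 + s.x 0 * s.c0 * s.d0 + s.y 6 * s.c0 * s.d0
  + s.z 0 * s.c0 * s.d0 + s.u 6 * s.c0 * s.d0 + s.x 0 * s.y 6 * s.z 0 * s.c0
  + s.x 0 * s.y 6 * s.u 6 * s.c0 + s.x 0 * s.z 0 * s.u 6 * s.c0
  + s.y 6 * s.z 0 * s.u 6 * s.c0

/-- The candidate inverse of the E0 state transition map: each LFSR block is
shifted right by one position, the new first entry being obtained by solving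
the linear recurrence for the oldest bit, and the previous FSM state
`(c₋₁, d₋₁)` is recovered by solving the combiner equations. -/
def E0S (s : E0State) : E0State where
  x := fun j => if h : 0 < (j : ℕ) then
                  s.x ⟨(j : ℕ) - 1, Nat.lt_of_le_of_lt (Nat.sub_le _ _) j.isLt⟩
                else s.x 24 + s.x 4 + s.x 12 + s.x 16
  y := fun j => if h : 0 < (j : ℕ) then
                  s.y ⟨(j : ℕ) - 1, Nat.lt_of_le_of_lt (Nat.sub_le _ _) j.isLt⟩
                else s.y 30 + s.y 6 + s.y 14 + s.y 18
  z := fun j => if h : 0 < (j : ℕ) then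
                  s.z ⟨(j : ℕ) - 1, Nat.lt_of_le_of_lt (Nat.sub_le _ _) j.isLt⟩
                else s.z 32 + s.z 4 + s.z 8 + s.z 28
  u := fun j => if h : 0 < (j : ℕ) then
                  s.u ⟨(j : ℕ) - 1, Nat.lt_of_le_of_lt (Nat.sub_le _ _) j.isLt⟩
                else s.u 38 + s.u 2 + s.u 10 + s.u 34
  c0 := s.d1 + s.d0 + E0big s
  c1 := s.c0
  d0 := s.c1 + s.d1 + s.c0 + E0lin s + E0big s
  d1 := s.d0

/-!
The transition `E0T` clocks four LFSRs and updates the finite state machine. An LFSR clock is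
undone by shifting back: in characteristic 2 the dropped oldest bit is the feedback bit plus the
other taps. The machine update is of Feistel type: the new `(c0, d0)` is the old `(c1, d1)`, and the
new `(c1, d1)` is the old `(c0, d0)` plus `E0lin`, `E0big` and old bits, all readable from the new
state, because the taps `x 1, y 7, z 1, u 7` used by the update sit at `x 0, y 6, z 0, u 6` after
the shift. So both nonlinear terms can be recomputed and cancelled.
-/

section LFSR

variable {R : Type*} [Add R] {n : ℕ} (a b c : Fin n)

/-- One clock of an LFSR with feedback taps `0, a + 1, b + 1, c + 1`. -/
def lfsrStep (v : Fin (n + 1) → R) : Fin (n + 1) → R := fun j =>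
  if h : (j : ℕ) + 1 < n + 1 then v ⟨j + 1, h⟩ else v 0 + v a.succ + v b.succ + v c.succ

/-- In characteristic 2 the dropped bit is the feedback bit plus the other taps, which after the shift
sit one position lower. -/
def lfsrStepBack (v : Fin (n + 1) → R) : Fin (n + 1) → R := fun j =>
  if h : 0 < (j : ℕ) then v ⟨j - 1, by omega⟩
  else v (Fin.last n) + v a.castSucc + v b.castSucc + v c.castSucc

variable {a b c}

theorem lfsrStep_castSucc (v : Fin (n + 1) → R) (i : Fin n) :
    lfsrStep a b c v i.castSucc = v i.succ :=
  dif_pos (Nat.succ_lt_succ i.isLt)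

theorem lfsrStep_last (v : Fin (n + 1) → R) :
    lfsrStep a b c v (Fin.last n) = v 0 + v a.succ + v b.succ + v c.succ :=
  dif_neg (Nat.lt_irrefl _)

theorem lfsrStepBack_succ (v : Fin (n + 1) → R) (i : Fin n) :
    lfsrStepBack a b c v i.succ = v i.castSucc :=
  dif_pos i.succ_pos

theorem lfsrStepBack_zero (v : Fin (n + 1) → R) :
    lfsrStepBack a b c v 0 = v (Fin.last n) + v a.castSucc + v b.castSucc + v c.castSucc :=
  dif_neg (Nat.lt_irrefl 0)

end LFSR

section LFSRCharTwo

variable {R : Type*} [CommRing R] [CharP R 2] {n : ℕ} {a b c : Fin n}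

theorem lfsrStepBack_lfsrStep (v : Fin (n + 1) → R) : lfsrStepBack a b c (lfsrStep a b c v) = v := by
  funext j
  cases j using Fin.cases with
  | zero =>
    simp only [lfsrStepBack_zero, lfsrStep_last, lfsrStep_castSucc]
    grind
  | succ i => rw [lfsrStepBack_succ, lfsrStep_castSucc]

theorem lfsrStep_lfsrStepBack (v : Fin (n + 1) → R) : lfsrStep a b c (lfsrStepBack a b c v) = v := by
  funext j
  cases j using Fin.lastCases with
  | last =>
    simp only [lfsrStep_last, lfsrStepBack_zero, lfsrStepBack_succ]
    grind
  | cast i => rw [lfsrStep_castSucc, lfsrStepBack_succ]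

end LFSRCharTwo

section E0

variable (s : E0State)

theorem E0T_x : (E0T s).x = lfsrStep 4 12 16 s.x := rfl
theorem E0T_y : (E0T s).y = lfsrStep 6 14 18 s.y := rfl
theorem E0T_z : (E0T s).z = lfsrStep 4 8 28 s.z := rfl
theorem E0T_u : (E0T s).u = lfsrStep 2 10 34 s.u := rfl

theorem E0S_x : (E0S s).x = lfsrStepBack 4 12 16 s.x := rfl
theorem E0S_y : (E0S s).y = lfsrStepBack 6 14 18 s.y := rfl
theorem E0S_z : (E0S s).z = lfsrStepBack 4 8 28 s.z := rfl
theorem E0S_u : (E0S s).u = lfsrStepBack 2 10 34 s.u := rfl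

theorem E0T_c1 : (E0T s).c1 = E0lin (E0T s) + s.c1 + s.d1 + s.c0 + s.d0 := rfl
theorem E0T_d1 : (E0T s).d1 = E0big (E0T s) + s.d1 + s.c0 := rfl

theorem E0lin_E0T_E0S : E0lin (E0T (E0S s)) = E0lin s := rfl
theorem E0big_E0T_E0S : E0big (E0T (E0S s)) = E0big s := rfl

theorem E0S_E0T : E0S (E0T s) = s := by
  ext1
  · rw [E0S_x, E0T_x, lfsrStepBack_lfsrStep]
  · rw [E0S_y, E0T_y, lfsrStepBack_lfsrStep]
  · rw [E0S_z, E0T_z, lfsrStepBack_lfsrStep]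
  · rw [E0S_u, E0T_u, lfsrStepBack_lfsrStep]
  · show (E0T s).d1 + s.d1 + E0big (E0T s) = s.c0
    rw [E0T_d1]
    grind
  · rfl
  · show (E0T s).c1 + (E0T s).d1 + s.c1 + E0lin (E0T s) + E0big (E0T s) = s.d0
    rw [E0T_c1, E0T_d1]
    grind
  · rfl

theorem E0T_E0S : E0T (E0S s) = s := by
  ext1
  · rw [E0T_x, E0S_x, lfsrStep_lfsrStepBack]
  · rw [E0T_y, E0S_y, lfsrStep_lfsrStepBack]
  · rw [E0T_z, E0S_z, lfsrStep_lfsrStepBack]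
  · rw [E0T_u, E0S_u, lfsrStep_lfsrStepBack]
  · rfl
  · rw [E0T_c1, E0lin_E0T_E0S]
    show E0lin s + s.c0 + s.d0 + (s.d1 + s.d0 + E0big s) + (s.c1 + s.d1 + s.c0 + E0lin s + E0big s)
      = s.c1
    grind
  · rfl
  · rw [E0T_d1, E0big_E0T_E0S]
    show E0big s + s.d0 + (s.d1 + s.d0 + E0big s) = s.d1
    grind

end E0

/-- `E0S` is a two-sided inverse of the E0 state transition map. -/
theorem stmt_14 : E0S ∘ E0T = id ∧ E0T ∘ E0S = id :=
  ⟨funext E0S_E0T, funext E0T_E0S⟩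
end

section
/- Over GF(2), consider the polynomial G = (A₁ + 1)·A₃ + A₂ + A₄ in the 14 variables x₁, x₂, x₃, y₇, y₈, y₉, z₁, z₂, z₃, u₇, u₈, u₉, c₀, d₀, where (for fixed parameters b₀, b₁, b₂ ∈ GF(2)): A₁ = u₇x₁ + u₇y₇ + u₇z₁ + x₁y₇ + x₁z₁ + y₇z₁ + b₀(x₁+y₇+z₁+u₇) + c₀ + d₀ + x₂ + y₈ + z₂ + u₈ + b₀ + b₁; A₂ = u₈x₂ + u₈y₈ + u₈z₂ + x₂y₈ + x₂z₂ + y₈z₂ + b₁(x₂+y₈+z₂+u₈) + x₁ + x₃ + y₇ + y₉ + z₁ + z₃ + u₇ + u₉ + b₀ + b₁ + b₂; A₃ = u₇x₁ + u₇y₇ + u₇z₁ + x₁y₇ + x₁z₁ + y₇z₁ + (b₀+1)(x₁+y₇+z₁+u₇) + 1; A₄ = u₇x₁y₇z₁ + (b₀+1)(u₇x₁y₇ + u₇x₁z₁ + u₇y₇z₁ + x₁y₇z₁) + c₀. Then for every choice of b₀, b₁, b₂ ∈ GF(2), the Boolean function GF(2)¹⁴ → GF(2) induced by G is balanced: it takes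 the value 0 on exactly 2¹³ of the 2¹⁴ input vectors. -/
/-! The variable x₃ occurs in G only through the linear term x₃ of A₂, so flipping x₃ flips G.
Translation by the third unit vector is therefore a bijection from the zeros of G onto its
non-zeros, and each set has half of the 2¹⁴ points. -/

/-- The polynomial G = (A₁+1)A₃ + A₂ + A₄ in 14 variables from the attack on E0. -/
def Gfun (b0 b1 b2 x1 x2 x3 y7 y8 y9 z1 z2 z3 u7 u8 u9 c0 d0 : ZMod 2) : ZMod 2 :=
  let A1 := u7*x1 + u7*y7 + u7*z1 + x1*y7 + x1*z1 + y7*z1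
    + b0*(x1 + y7 + z1 + u7) + c0 + d0 + x2 + y8 + z2 + u8 + b0 + b1
  let A2 := u8*x2 + u8*y8 + u8*z2 + x2*y8 + x2*z2 + y8*z2
    + b1*(x2 + y8 + z2 + u8) + x1 + x3 + y7 + y9 + z1 + z3 + u7 + u9 + b0 + b1 + b2
  let A3 := u7*x1 + u7*y7 + u7*z1 + x1*y7 + x1*z1 + y7*z1
    + (b0 + 1)*(x1 + y7 + z1 + u7) + 1
  let A4 := u7*x1*y7*z1 + (b0 + 1)*(u7*x1*y7 + u7*x1*z1 + u7*y7*z1 + x1*y7*z1) + c0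
  (A1 + 1) * A3 + A2 + A4

theorem two_mul_card_zeros_of_map_add_eq_add_one {V : Type*} [AddGroup V] [Finite V]
    (g : V → ZMod 2) (a : V) (h : ∀ v, g (v + a) = g v + 1) :
    2 * Nat.card {v // g v = 0} = Nat.card V := by
  have flip : ∀ x : ZMod 2, ¬ x + 1 = 0 ↔ x = 0 := by decide
  have zeros_equiv_nonzeros : {v // g v = 0} ≃ {v // ¬ g v = 0} :=
    (Equiv.addRight a).subtypeEquiv fun v => by simp only [Equiv.coe_addRight, h, flip]
  rw [← Nat.card_congr (Equiv.sumCompl fun v => g v = 0), Nat.card_sum,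
    Nat.card_congr zeros_equiv_nonzeros, two_mul]

lemma Gfun_x3_add_one (b0 b1 b2 x1 x2 x3 y7 y8 y9 z1 z2 z3 u7 u8 u9 c0 d0 : ZMod 2) :
    Gfun b0 b1 b2 x1 x2 (x3 + 1) y7 y8 y9 z1 z2 z3 u7 u8 u9 c0 d0
      = Gfun b0 b1 b2 x1 x2 x3 y7 y8 y9 z1 z2 z3 u7 u8 u9 c0 d0 + 1 := by
  simp only [Gfun]; ring

/-- For every choice of the keystream bits b₀, b₁, b₂, the Boolean function
GF(2)¹⁴ → GF(2) induced by G is balanced: it vanishes on exactly 2¹³ inputs. -/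
theorem stmt_16 (b0 b1 b2 : ZMod 2) :
    Nat.card {v : Fin 14 → ZMod 2 //
      Gfun b0 b1 b2 (v 0) (v 1) (v 2) (v 3) (v 4) (v 5) (v 6) (v 7) (v 8)
        (v 9) (v 10) (v 11) (v 12) (v 13) = 0} = 2 ^ 13 := by
  let g : (Fin 14 → ZMod 2) → ZMod 2 := fun v =>
    Gfun b0 b1 b2 (v 0) (v 1) (v 2) (v 3) (v 4) (v 5) (v 6) (v 7) (v 8)
      (v 9) (v 10) (v 11) (v 12) (v 13)
  have flip_x3 : ∀ v, g (v + Pi.single 2 1) = g v + 1 := fun v => by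
    simpa [g, Pi.single_apply] using Gfun_x3_add_one b0 b1 b2 (v 0) (v 1) (v 2) (v 3) (v 4)
      (v 5) (v 6) (v 7) (v 8) (v 9) (v 10) (v 11) (v 12) (v 13)
  have balanced := two_mul_card_zeros_of_map_add_eq_add_one g _ flip_x3
  rw [Nat.card_fun, Nat.card_zmod, Nat.card_fin] at balanced
  change Nat.card {v // g v = 0} = 2 ^ 13
  omega
end

section
/- Let K be a field, R = K[{xᵢ(t) : 1 ≤ i ≤ n, t ∈ ℕ}], σ : R → R the shift endomorphism xᵢ(t) ↦ xᵢ(t+1), and let R̄ = K[{xᵢ(j) : 0 ≤ j ≤ rᵢ−1}] ⊆ R with T̄ : R̄ → R̄ the state transition endomorphism of an explicit difference system with defining polynomials f₁,…,fₙ ∈ R̄ (T̄ maps xᵢ(j) ↦ xᵢ(j+1) for j < rᵢ−1 and xᵢ(rᵢ−1) ↦ fᵢ). Define φ : R → R̄ as the algebra homomorphism that is the identity on R̄ and sends xᵢ(rᵢ + t) ↦ T̄^t(fᵢ) for all t ≥ 0. Then φ ∘ σ = T̄ ∘ φ, and the kernel of φ equals the difference ideal I of R generated (as a σ-stable ideal)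 by x₁(r₁) − f₁, …, xₙ(rₙ) − fₙ. -/
/-!
Both sides of the intertwining relation are algebra maps, so it suffices to compare them on the
variables. Given it, each generator σᵗ(xᵢ(rᵢ) − fᵢ) of `I` maps to T̄ᵗ(fᵢ − fᵢ) = 0. Conversely,
`I` is σ-stable, so σ descends to `R ⧸ I`, where it agrees with T̄ on `R̄` (the only relation
needed is xᵢ(rᵢ) ≡ fᵢ). Hence xᵢ(rᵢ + t) = σᵗ(xᵢ(rᵢ)) ≡ σᵗ(fᵢ) ≡ T̄ᵗ(fᵢ) = φ(xᵢ(rᵢ + t)) modulo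
`I`, so every p is congruent to φ(p) and `ker φ ⊆ I`.
-/

open MvPolynomial Function

section DifferenceIdeal

variable {R A B : Type*} [CommSemiring R] [CommRing A] [CommRing B] [Algebra R A] [Algebra R B]
  {κ : Type*}

def differenceIdeal (σ : A →ₐ[R] A) (a : κ → A) : Ideal A :=
  Ideal.span {g | ∃ i t, g = (⇑σ)^[t] (a i)}

variable (σ : A →ₐ[R] A) (a : κ → A)

theorem iterate_mem_differenceIdeal (i : κ) (t : ℕ) :
    (⇑σ)^[t] (a i) ∈ differenceIdeal σ a :=
  Ideal.subset_span ⟨i, t, rfl⟩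

theorem differenceIdeal_le_comap : differenceIdeal σ a ≤ (differenceIdeal σ a).comap σ :=
  Ideal.span_le.mpr fun _ ⟨i, t, hg⟩ => by
    simpa [hg, ← iterate_succ_apply' σ] using iterate_mem_differenceIdeal σ a i (t + 1)

theorem differenceIdeal_le_ker (φ : A →ₐ[R] B) (T : B →ₐ[R] B) (hφ : Semiconj φ σ T)
    (ha : ∀ i, φ (a i) = 0) : differenceIdeal σ a ≤ RingHom.ker φ :=
  Ideal.span_le.mpr fun _ ⟨i, t, hg⟩ => by
    simp [hg, (hφ.iterate_right t).eq, ha, iterate_map_zero]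

theorem semiconj_mk_differenceIdeal :
    Semiconj (Ideal.Quotient.mk (differenceIdeal σ a)) σ
      (Ideal.quotientMap _ (σ : A →+* A) (differenceIdeal_le_comap σ a)) :=
  fun _ => (Ideal.quotientMap_mk ..).symm

theorem mk_iterate_eq_of_mk_eq {x y : A}
    (h : Ideal.Quotient.mk (differenceIdeal σ a) x = Ideal.Quotient.mk _ y) (t : ℕ) :
    Ideal.Quotient.mk (differenceIdeal σ a) ((⇑σ)^[t] x) = Ideal.Quotient.mk _ ((⇑σ)^[t] y) := by
  rw [((semiconj_mk_differenceIdeal σ a).iterate_right t).eq, h,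
    ((semiconj_mk_differenceIdeal σ a).iterate_right t).eq]

theorem mk_iterate_comp_eq (ι : B →ₐ[R] A) (T : B →ₐ[R] B)
    (h : ∀ b, Ideal.Quotient.mk (differenceIdeal σ a) (σ (ι b)) = Ideal.Quotient.mk _ (ι (T b)))
    (t : ℕ) (b : B) :
    Ideal.Quotient.mk (differenceIdeal σ a) ((⇑σ)^[t] (ι b)) =
      Ideal.Quotient.mk _ (ι ((⇑T)^[t] b)) := by
  have hsemi : Semiconj (Ideal.Quotient.mk (differenceIdeal σ a) ∘ ι) T
      (Ideal.quotientMap _ (σ : A →+* A) (differenceIdeal_le_comap σ a)) := fun b => by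
    simp only [comp_apply, ← h, ← (semiconj_mk_differenceIdeal σ a).eq]
  rw [((semiconj_mk_differenceIdeal σ a).iterate_right t).eq]
  exact ((hsemi.iterate_right t).eq b).symm

end DifferenceIdeal

theorem iterate_shift_X {R κ : Type*} [CommSemiring R]
    (σ : MvPolynomial (κ × ℕ) R →ₐ[R] MvPolynomial (κ × ℕ) R)
    (hσ : ∀ i t, σ (X (i, t)) = X (i, t + 1)) (i : κ) (j t : ℕ) :
    (⇑σ)^[t] (X (i, j)) = X (i, j + t) := by
  induction t with
  | zero => rfl
  | succ t ih => rw [iterate_succ_apply', ih, hσ, add_assoc]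

section ExplicitSystem

variable {K : Type*} [CommRing K] {n : ℕ} {r : Fin n → ℕ}
  {f : (i : Fin n) → MvPolynomial {p : Fin n × ℕ // p.2 < r p.1} K}
  {σ : MvPolynomial (Fin n × ℕ) K →ₐ[K] MvPolynomial (Fin n × ℕ) K}
  {ι : MvPolynomial {p : Fin n × ℕ // p.2 < r p.1} K →ₐ[K] MvPolynomial (Fin n × ℕ) K}
  {Tbar : MvPolynomial {p : Fin n × ℕ // p.2 < r p.1} K →ₐ[K]
    MvPolynomial {p : Fin n × ℕ // p.2 < r p.1} K}
  {φ : MvPolynomial (Fin n × ℕ) K →ₐ[K] MvPolynomial {p : Fin n × ℕ // p.2 < r p.1} K}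

theorem phi_comp_shift (hσ : ∀ i t, σ (X (i, t)) = X (i, t + 1))
    (hT : ∀ q : {p : Fin n × ℕ // p.2 < r p.1},
      Tbar (X q) = if h : q.val.2 + 1 < r q.val.1
        then X (⟨(q.val.1, q.val.2 + 1), h⟩ : {p : Fin n × ℕ // p.2 < r p.1})
        else f q.val.1)
    (hφ1 : ∀ q : {p : Fin n × ℕ // p.2 < r p.1}, φ (X q.val) = X q)
    (hφ2 : ∀ i t, φ (X (i, r i + t)) = (⇑Tbar)^[t] (f i)) :
    φ.comp σ = Tbar.comp φ := by
  refine algHom_ext fun ⟨i, j⟩ => ?_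
  rw [AlgHom.comp_apply, AlgHom.comp_apply, hσ]
  by_cases hj : j < r i
  · rw [hφ1 ⟨(i, j), hj⟩, hT]
    split_ifs with hj1
    · exact hφ1 ⟨(i, j + 1), hj1⟩
    · have hjr : j + 1 = r i + 0 := by dsimp only at hj1; omega
      rw [hjr, hφ2 i 0]
      rfl
  · obtain ⟨t, rfl⟩ := Nat.exists_eq_add_of_le (not_lt.mp hj)
    rw [add_assoc, hφ2, hφ2, iterate_succ_apply']

theorem phi_comp_iota (hι : ∀ q : {p : Fin n × ℕ // p.2 < r p.1}, ι (X q) = X q.val)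
    (hφ1 : ∀ q : {p : Fin n × ℕ // p.2 < r p.1}, φ (X q.val) = X q) :
    φ.comp ι = AlgHom.id K _ :=
  algHom_ext fun q => by rw [AlgHom.comp_apply, hι, hφ1, AlgHom.id_apply]

theorem mk_shift_iota (hσ : ∀ i t, σ (X (i, t)) = X (i, t + 1))
    (hι : ∀ q : {p : Fin n × ℕ // p.2 < r p.1}, ι (X q) = X q.val)
    (hT : ∀ q : {p : Fin n × ℕ // p.2 < r p.1},
      Tbar (X q) = if h : q.val.2 + 1 < r q.val.1
        then X (⟨(q.val.1, q.val.2 + 1), h⟩ : {p : Fin n × ℕ // p.2 < r p.1})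
        else f q.val.1)
    (b : MvPolynomial {p : Fin n × ℕ // p.2 < r p.1} K) :
    Ideal.Quotient.mk (differenceIdeal σ fun i => X (i, r i) - ι (f i)) (σ (ι b)) =
      Ideal.Quotient.mk _ (ι (Tbar b)) := by
  let J := differenceIdeal σ fun i => X (i, r i) - ι (f i)
  suffices ((Ideal.Quotient.mkₐ K J).comp σ).comp ι = ((Ideal.Quotient.mkₐ K J).comp ι).comp Tbar
    from DFunLike.congr_fun this b
  refine algHom_ext fun ⟨⟨i, j⟩, hj⟩ => ?_
  simp only [AlgHom.comp_apply, Ideal.Quotient.mkₐ_eq_mk, hι, hσ, hT]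
  split_ifs with hj1
  · rw [hι]
  · have hjr : j + 1 = r i := by dsimp only at hj; omega
    rw [hjr]
    exact Ideal.Quotient.eq.mpr (iterate_mem_differenceIdeal σ _ i 0)

theorem mk_iota_phi (hσ : ∀ i t, σ (X (i, t)) = X (i, t + 1))
    (hι : ∀ q : {p : Fin n × ℕ // p.2 < r p.1}, ι (X q) = X q.val)
    (hT : ∀ q : {p : Fin n × ℕ // p.2 < r p.1},
      Tbar (X q) = if h : q.val.2 + 1 < r q.val.1
        then X (⟨(q.val.1, q.val.2 + 1), h⟩ : {p : Fin n × ℕ // p.2 < r p.1})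
        else f q.val.1)
    (hφ1 : ∀ q : {p : Fin n × ℕ // p.2 < r p.1}, φ (X q.val) = X q)
    (hφ2 : ∀ i t, φ (X (i, r i + t)) = (⇑Tbar)^[t] (f i)) (p : MvPolynomial (Fin n × ℕ) K) :
    Ideal.Quotient.mk (differenceIdeal σ fun i => X (i, r i) - ι (f i)) (ι (φ p)) =
      Ideal.Quotient.mk _ p := by
  let J := differenceIdeal σ fun i => X (i, r i) - ι (f i)
  suffices (Ideal.Quotient.mkₐ K J).comp (ι.comp φ) = Ideal.Quotient.mkₐ K J
    from DFunLike.congr_fun this p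
  refine algHom_ext fun ⟨i, j⟩ => ?_
  simp only [AlgHom.comp_apply, Ideal.Quotient.mkₐ_eq_mk]
  by_cases hj : j < r i
  · rw [hφ1 ⟨(i, j), hj⟩, hι]
  · obtain ⟨t, rfl⟩ := Nat.exists_eq_add_of_le (not_lt.mp hj)
    have hgen : Ideal.Quotient.mk J (X (i, r i)) = Ideal.Quotient.mk J (ι (f i)) :=
      Ideal.Quotient.eq.mpr (iterate_mem_differenceIdeal σ _ i 0)
    rw [hφ2, ← mk_iterate_comp_eq σ _ ι Tbar (mk_shift_iota hσ hι hT),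
      ← mk_iterate_eq_of_mk_eq σ _ hgen, iterate_shift_X σ hσ]

end ExplicitSystem

/-- The evaluation morphism φ : R → R̄ intertwines the shift σ with the state
transition endomorphism T̄, and its kernel is the σ-difference ideal generated
by the polynomials xᵢ(rᵢ) − fᵢ (Theorem 3.12 of the paper). -/
theorem stmt_19 (K : Type*) [Field K] (n : ℕ) (r : Fin n → ℕ)
    (f : (i : Fin n) → MvPolynomial {p : Fin n × ℕ // p.2 < r p.1} K)
    (σ : MvPolynomial (Fin n × ℕ) K →ₐ[K] MvPolynomial (Fin n × ℕ) K)
    (hσ : ∀ (i : Fin n) (t : ℕ), σ (X (i, t)) = X (i, t + 1))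
    (ι : MvPolynomial {p : Fin n × ℕ // p.2 < r p.1} K →ₐ[K]
          MvPolynomial (Fin n × ℕ) K)
    (hι : ∀ q : {p : Fin n × ℕ // p.2 < r p.1}, ι (X q) = X q.val)
    (Tbar : MvPolynomial {p : Fin n × ℕ // p.2 < r p.1} K →ₐ[K]
             MvPolynomial {p : Fin n × ℕ // p.2 < r p.1} K)
    (hT : ∀ q : {p : Fin n × ℕ // p.2 < r p.1},
      Tbar (X q) = if h : q.val.2 + 1 < r q.val.1
        then X (⟨(q.val.1, q.val.2 + 1), h⟩ : {p : Fin n × ℕ // p.2 < r p.1})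
        else f q.val.1)
    (φ : MvPolynomial (Fin n × ℕ) K →ₐ[K]
           MvPolynomial {p : Fin n × ℕ // p.2 < r p.1} K)
    (hφ1 : ∀ q : {p : Fin n × ℕ // p.2 < r p.1}, φ (X q.val) = X q)
    (hφ2 : ∀ (i : Fin n) (t : ℕ),
      φ (X (i, r i + t)) = (fun p => Tbar p)^[t] (f i)) :
    (∀ p, φ (σ p) = Tbar (φ p)) ∧
    RingHom.ker φ =
      Ideal.span {g : MvPolynomial (Fin n × ℕ) K |
        ∃ (i : Fin n) (t : ℕ),
          g = (fun p => σ p)^[t] (X (i, r i) - ι (f i))} := by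
  have hcomm : Semiconj φ σ Tbar := DFunLike.congr_fun (phi_comp_shift hσ hT hφ1 hφ2)
  change _ ∧ RingHom.ker φ = differenceIdeal σ fun i => X (i, r i) - ι (f i)
  refine ⟨hcomm, le_antisymm (fun p hp => ?_) ?_⟩
  · rw [← Ideal.Quotient.eq_zero_iff_mem, ← mk_iota_phi hσ hι hT hφ1 hφ2, RingHom.mem_ker.mp hp,
      map_zero, map_zero]
  · refine differenceIdeal_le_ker σ _ φ Tbar hcomm fun i => ?_
    rw [map_sub, ← AlgHom.comp_apply φ ι, phi_comp_iota hι hφ1, AlgHom.id_apply, sub_eq_zero]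
    exact hφ2 i 0
end
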